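/- In the pointwise model of a paraquaternionic CR-submanifold, the paraquaternionic subspace generated by W decomposes as W + J₁(W) + J₂(W) + J₃(W) = W ⊕ ν^⊥, where ν^⊥ := ν₁ + ν₂ + ν₃; that is, the subspace sum W + J₁(W) + J₂(W) + J₃(W) equals W + ν^⊥, this sum is direct, and W is g-orthogonal to ν^⊥. -/

import Mathlib

/-- The `g`-orthogonal complement of `S` taken inside `W`:
`{w ∈ W | ∀ s ∈ S, g w s = 0}`. -/
def orthIn {V : Type*} [AddCommGroup V] [Module ℝ V]
    (g : LinearMap.BilinForm ℝ V) (W S : Submodule ℝ V) : Submodule ℝ V where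
  carrier := {w | w ∈ W ∧ ∀ s ∈ S, g w s = 0}
  add_mem' := fun {a b} ha hb => ⟨W.add_mem ha.1 hb.1, fun s hs => by
    simp [ha.2 s hs, hb.2 s hs]⟩
  zero_mem' := ⟨W.zero_mem, fun s _ => by simp⟩
  smul_mem' := fun c x hx => ⟨W.smul_mem c hx.1, fun s hs => by
    simp [hx.2 s hs]⟩


/-!
Nondegeneracy of `g` on `D` splits `W = D ⊕ D^⊥`. Since each `J_α` preserves `D ⊆ W`,
`J_α(W) ⊆ W + ν_α`, which gives the equality of sums. The CR condition puts `ν^⊥` inside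
`W^⊥`, and nondegeneracy of `g` on `W` then forces `W ∩ ν^⊥ = 0`.
-/

open LinearMap (BilinForm)

section OrthIn

variable {V : Type*} [AddCommGroup V] [Module ℝ V] {g : BilinForm ℝ V}

theorem orthIn_le (g : BilinForm ℝ V) (W S : Submodule ℝ V) : orthIn g W S ≤ W :=
  fun _ hx => hx.1

theorem orthIn_eq_inf_orthogonal (hg : g.IsRefl) (W S : Submodule ℝ V) :
    orthIn g W S = W ⊓ g.orthogonal S := by
  ext x
  simp only [Submodule.mem_inf, BilinForm.mem_orthogonal_iff]
  exact and_congr_right fun _ =>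
    ⟨fun h s hs => hg _ _ (h s hs), fun h s hs => hg _ _ (h s hs)⟩

theorem disjoint_orthIn_top {W : Submodule ℝ V}
    (hW : ∀ w ∈ W, (∀ w' ∈ W, g w w' = 0) → w = 0) : Disjoint W (orthIn g ⊤ W) :=
  Submodule.disjoint_def.mpr fun x hxW hx => hW x hxW hx.2

theorem sup_orthIn_eq [FiniteDimensional ℝ V] (hg : g.IsRefl) {W D : Submodule ℝ V}
    (hDW : D ≤ W) (hD : ∀ d ∈ D, (∀ d' ∈ D, g d d' = 0) → d = 0) :
    D ⊔ orthIn g W D = W := by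
  have hcompl : IsCompl D (g.orthogonal D) := by
    rw [BilinForm.isCompl_orthogonal_iff_disjoint hg, ← top_inf_eq (g.orthogonal D),
      ← orthIn_eq_inf_orthogonal hg]
    exact disjoint_orthIn_top hD
  rw [orthIn_eq_inf_orthogonal hg, inf_comm, ← sup_inf_assoc_of_le _ hDW,
    hcompl.sup_eq_top, top_inf_eq]

end OrthIn

theorem Submodule.sup_map_eq_sup_map_of_sup_eq {R M : Type*} [Semiring R] [AddCommMonoid M]
    [Module R M] {W D N : Submodule R M} {J : M →ₗ[R] M} (hDW : D ≤ W) (hNW : N ≤ W) (hW : D ⊔ N = W)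
    (hJD : D.map J ≤ D) : W ⊔ W.map J = W ⊔ N.map J := by
  refine le_antisymm (sup_le le_sup_left ?_) (sup_le_sup_left (map_mono hNW) _)
  calc W.map J = D.map J ⊔ N.map J := by rw [← hW, map_sup]
    _ ≤ W ⊔ N.map J := sup_le_sup_right (hJD.trans hDW) _

theorem paraquaternionic_CR_generated_subspace_general
    (V : Type*) [AddCommGroup V] [Module ℝ V] [FiniteDimensional ℝ V]
    (g : LinearMap.BilinForm ℝ V)
    (hsymm : ∀ x y : V, g x y = g y x)
    (J1 J2 J3 : V →ₗ[ℝ] V)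
    (W D : Submodule ℝ V) (hDW : D ≤ W)
    (hWnd : ∀ w ∈ W, (∀ w' ∈ W, g w w' = 0) → w = 0)
    (hDnd : ∀ d ∈ D, (∀ d' ∈ D, g d d' = 0) → d = 0)
    (hJ1D : D.map J1 = D) (hJ2D : D.map J2 = D) (hJ3D : D.map J3 = D)
    (hCR1 : (orthIn g W D).map J1 ≤ orthIn g ⊤ W)
    (hCR2 : (orthIn g W D).map J2 ≤ orthIn g ⊤ W)
    (hCR3 : (orthIn g W D).map J3 ≤ orthIn g ⊤ W)
    (nuperp : Submodule ℝ V)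
    (hnuperp : nuperp =
      (orthIn g W D).map J1 ⊔ (orthIn g W D).map J2 ⊔ (orthIn g W D).map J3) :
    W ⊔ W.map J1 ⊔ W.map J2 ⊔ W.map J3 = W ⊔ nuperp ∧
    W ⊓ nuperp = ⊥ ∧
    (∀ w ∈ W, ∀ n ∈ nuperp, g w n = 0) := by
  subst hnuperp
  have hW : D ⊔ orthIn g W D = W := sup_orthIn_eq (fun x y h => hsymm x y ▸ h) hDW hDnd
  have hsup {J : V →ₗ[ℝ] V} (hJD : D.map J = D) :=
    Submodule.sup_map_eq_sup_map_of_sup_eq hDW (orthIn_le g W D) hW hJD.le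
  have hperp := sup_le (sup_le hCR1 hCR2) hCR3
  refine ⟨?_, disjoint_iff.mp ((disjoint_orthIn_top hWnd).mono_right hperp),
    fun w hw n hn => hsymm w n ▸ (hperp hn).2 w hw⟩
  calc W ⊔ W.map J1 ⊔ W.map J2 ⊔ W.map J3
      = (W ⊔ W.map J1) ⊔ (W ⊔ W.map J2) ⊔ (W ⊔ W.map J3) := by
        simp only [sup_assoc, sup_left_comm, sup_left_idem]
    _ = _ := by
        rw [hsup hJ1D, hsup hJ2D, hsup hJ3D]
        simp only [sup_assoc, sup_left_comm, sup_left_idem]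

/-- Pointwise model of a paraquaternionic CR-submanifold: the paraquaternionic
subspace generated by `W` decomposes as `W + J₁(W) + J₂(W) + J₃(W) = W ⊕ ν^⊥`,
where `ν^⊥ := ν₁ + ν₂ + ν₃` with `ν_α := J_α(D^⊥)`: the two subspace sums agree,
`W ∩ ν^⊥ = 0`, and `W` is `g`-orthogonal to `ν^⊥`. -/
theorem paraquaternionic_CR_generated_subspace
    (V : Type*) [AddCommGroup V] [Module ℝ V] [FiniteDimensional ℝ V]
    (g : LinearMap.BilinForm ℝ V)
    (hsymm : ∀ x y : V, g x y = g y x)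
    (hnd : g.Nondegenerate)
    (J1 J2 J3 : V →ₗ[ℝ] V)
    (h11 : J1 ∘ₗ J1 = -LinearMap.id)
    (h22 : J2 ∘ₗ J2 = LinearMap.id)
    (h33 : J3 ∘ₗ J3 = LinearMap.id)
    (h12 : J1 ∘ₗ J2 = -J3) (h21 : J2 ∘ₗ J1 = J3)
    (h23 : J2 ∘ₗ J3 = J1) (h32 : J3 ∘ₗ J2 = -J1)
    (h31 : J3 ∘ₗ J1 = -J2) (h13 : J1 ∘ₗ J3 = J2)
    (hg1 : ∀ x y : V, g (J1 x) (J1 y) = g x y)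
    (hg2 : ∀ x y : V, g (J2 x) (J2 y) = -g x y)
    (hg3 : ∀ x y : V, g (J3 x) (J3 y) = -g x y)
    (W D : Submodule ℝ V) (hDW : D ≤ W)
    (hWnd : ∀ w ∈ W, (∀ w' ∈ W, g w w' = 0) → w = 0)
    (hDnd : ∀ d ∈ D, (∀ d' ∈ D, g d d' = 0) → d = 0)
    (hJ1D : D.map J1 = D) (hJ2D : D.map J2 = D) (hJ3D : D.map J3 = D)
    (hCR1 : (orthIn g W D).map J1 ≤ orthIn g ⊤ W)
    (hCR2 : (orthIn g W D).map J2 ≤ orthIn g ⊤ W)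
    (hCR3 : (orthIn g W D).map J3 ≤ orthIn g ⊤ W)
    (nuperp : Submodule ℝ V)
    (hnuperp : nuperp =
      (orthIn g W D).map J1 ⊔ (orthIn g W D).map J2 ⊔ (orthIn g W D).map J3) :
    W ⊔ W.map J1 ⊔ W.map J2 ⊔ W.map J3 = W ⊔ nuperp ∧
    W ⊓ nuperp = ⊥ ∧
    (∀ w ∈ W, ∀ n ∈ nuperp, g w n = 0) :=
  paraquaternionic_CR_generated_subspace_general V g hsymm J1 J2 J3 W D hDW hWnd hDnd hJ1D hJ2D hJ3D
    hCR1 hCR2 hCR3 nuperp hnuperp
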